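/- Let E and E₀ be Hilbert spaces, a : E × E₀ → ℝ a continuous bilinear form, and M : E → E₀ a continuous linear surjection. Assume there exists γ > 0 such that a(u, M u) ≥ γ ‖u‖² for every u ∈ E. Then for every continuous linear functional L on E₀ there exists a unique u ∈ E satisfying a(u, v) = L(v) for every v ∈ E₀. -/
import Mathlib

open scoped RealInnerProductSpace

/-- Tartar's Lax–Milgram-type lemma: if `a` is a continuous bilinear form on `E × E₀`,
`M : E → E₀` is a continuous linear surjection, and `a(u, M u) ≥ γ ‖u‖²`, then for every
continuous linear functional `L` on `E₀` there is a unique `u` with `a(u, v) = L(v)` for all `v`. -/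
theorem stmt_0 {E E₀ : Type*}
    [NormedAddCommGroup E] [InnerProductSpace ℝ E] [CompleteSpace E]
    [NormedAddCommGroup E₀] [InnerProductSpace ℝ E₀] [CompleteSpace E₀]
    (a : E →L[ℝ] E₀ →L[ℝ] ℝ) (M : E →L[ℝ] E₀) (hM : Function.Surjective M)
    (γ : ℝ) (hγ : 0 < γ) (hcoer : ∀ u : E, γ * ‖u‖ ^ 2 ≤ a u (M u)) :
    ∀ L : E₀ →L[ℝ] ℝ, ∃! u : E, ∀ v : E₀, a u v = L v := by
  intro L
  -- bilinear form b u w = a u (M w)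
  set b : E →L[ℝ] E →L[ℝ] ℝ :=
    (((ContinuousLinearMap.compL ℝ E E₀ ℝ).flip M).comp a) with hb
  have hbval : ∀ u w : E, b u w = a u (M w) := fun u w => rfl
  have hcoerb : IsCoercive b := by
    refine ⟨γ, hγ, fun u => ?_⟩
    have := hcoer u
    rw [hbval]
    nlinarith [this]
  -- Riesz representation of L ∘ M
  set f : E →L[ℝ] ℝ := L.comp M with hf
  set z : E := (InnerProductSpace.toDual ℝ E).symm f with hz
  have hzval : ∀ w : E, ⟪z, w⟫ = f w := fun w => by
    rw [hz, InnerProductSpace.toDual_symm_apply]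
  set u : E := hcoerb.continuousLinearEquivOfBilin.symm z with hu
  have hbu : ∀ w : E, b u w = f w := by
    intro w
    rw [← hzval w, ← hcoerb.continuousLinearEquivOfBilin_apply u w, hu,
      ContinuousLinearEquiv.apply_symm_apply]
  refine ⟨u, ?_, ?_⟩
  · intro v
    obtain ⟨w, rfl⟩ := hM v
    exact hbu w
  · intro u' hu'
    have h1 : ∀ v, a u' v = a u v := by
      intro v
      rw [hu' v]
      obtain ⟨w, rfl⟩ := hM v
      rw [← hbval, hbu w]; rfl
    have h2 : a (u' - u) (M (u' - u)) = 0 := by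
      simp [map_sub, h1]
    have h3 := hcoer (u' - u)
    rw [h2] at h3
    have h4 : ‖u' - u‖ ^ 2 ≤ 0 := by
      by_contra hc
      push_neg at hc
      exact absurd h3 (not_le.mpr (mul_pos hγ hc))
    have h5 : ‖u' - u‖ ^ 2 = 0 := le_antisymm h4 (sq_nonneg _)
    have h6 : u' - u = 0 := norm_eq_zero.mp (pow_eq_zero_iff two_ne_zero |>.mp h5)
    exact sub_eq_zero.mp h6
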